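/- arXiv:1407.7226 — 7 statements merged into one kernel-verified Lean document; each statement's English description precedes it below -/
import Mathlib

section
/- The class of invariably generated groups is closed under extensions: if N is a normal subgroup of G such that both N and G/N are invariably generated, then G is invariably generated. -/
/-!
If `H ≤ G` meets every conjugacy class of `G`, its image meets every conjugacy class of `G/N`,
so `HN = G`. Writing a conjugator as `k * m` with `k ∈ H`, `m ∈ N`, every `n ∈ N` is then
`N`-conjugate to an element of `H ∩ N`; hence `N ≤ H` and `H = HN = G`.
-/

/-- A group is invariably generated if the only subgroup meeting every
conjugacy class is the whole group. -/
def IsInvariablyGenerated (G : Type*) [Group G] : Prop :=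
  ∀ H : Subgroup G, (∀ g : G, ∃ h ∈ H, IsConj g h) → H = ⊤

open scoped Pointwise

namespace Subgroup

variable {G : Type*} [Group G]

def MeetsConjClasses (H : Subgroup G) : Prop :=
  ∀ g : G, ∃ h ∈ H, IsConj g h

theorem MeetsConjClasses.map {Q : Type*} [Group Q] {H : Subgroup G} {f : G →* Q}
    (hf : Function.Surjective f) (hH : H.MeetsConjClasses) : (H.map f).MeetsConjClasses := by
  intro q
  obtain ⟨g, rfl⟩ := hf q
  obtain ⟨h, hh, hconj⟩ := hH g
  exact ⟨f h, mem_map_of_mem f hh, f.map_isConj hconj⟩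

theorem MeetsConjClasses.subgroupOf {H N : Subgroup G} [N.Normal] (hH : H.MeetsConjClasses)
    (hsup : H ⊔ N = ⊤) : (H.subgroupOf N).MeetsConjClasses := by
  intro n
  obtain ⟨h, hh, hconj⟩ := hH n
  obtain ⟨c, rfl⟩ := isConj_iff.mp hconj
  have hc : c ∈ (H : Set G) * N := by
    rw [← mul_normal, hsup]
    exact mem_top c
  obtain ⟨k, hk, m, hm, rfl⟩ := Set.mem_mul.mp hc
  have hmn : k⁻¹ * (k * m * n * (k * m)⁻¹) * k = m * n * m⁻¹ := by group
  refine ⟨⟨m * n * m⁻¹, Normal.conj_mem ‹_› _ n.2 m⟩, ?_, isConj_iff.mpr ⟨⟨m, hm⟩, rfl⟩⟩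
  show m * n * m⁻¹ ∈ H
  rw [← hmn]
  exact H.mul_mem (H.mul_mem (H.inv_mem hk) hh) hk

end Subgroup

/-- Invariable generation is closed under extensions: if `N ⊴ G` is invariably
generated (as an abstract group) and `G/N` is invariably generated, then so is `G`. -/
theorem invariablyGenerated_of_extension {G : Type*} [Group G]
    (N : Subgroup G) [N.Normal]
    (hN : IsInvariablyGenerated N) (hQ : IsInvariablyGenerated (G ⧸ N)) :
    IsInvariablyGenerated G := by
  intro H hH
  have hmap : H.map (QuotientGroup.mk' N) = ⊤ :=
    hQ _ (Subgroup.MeetsConjClasses.map (QuotientGroup.mk'_surjective N) hH)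
  have hsup : H ⊔ N = ⊤ := by
    rw [sup_comm, ← QuotientGroup.comap_map_mk', hmap, Subgroup.comap_top]
  have hNH : N ≤ H :=
    Subgroup.subgroupOf_eq_top.mp (hN _ (Subgroup.MeetsConjClasses.subgroupOf hH hsup))
  rwa [sup_eq_left.mpr hNH] at hsup
end

section
/- The group of finitely supported permutations of ℕ is not invariably generated: the subgroup of finitely supported permutations supported on the even numbers is a proper subgroup meeting every conjugacy class. -/
open Equiv

def finitelySupportedPerms : Subgroup (Equiv.Perm ℕ) where
  carrier := {σ | {n : ℕ | σ n ≠ n}.Finite}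
  one_mem' := by simp
  mul_mem' := by
    intro a b ha hb
    apply Set.Finite.subset (ha.union hb)
    intro n hn
    by_cases h : b n = n
    · left; simpa [Equiv.Perm.mul_apply, h] using hn
    · right; exact h
  inv_mem' := by
    intro a ha
    apply ha.subset
    intro n hn
    simp only [Set.mem_setOf_eq] at hn ⊢
    intro h
    exact hn (a.injective (by simp [h]))

/-!
Conjugating `σ` by `τ` moves exactly the points `τ x` with `x` moved by `σ`. Since `σ` moves only
finitely many points and the even numbers form an infinite set, a product of swaps can send the
finitely many moved points to even numbers; the conjugate then fixes every odd number.
-/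

open MulAction

namespace Equiv.Perm

variable {α : Type*} [DecidableEq α]

theorem exists_mem_closure_isSwap_image_subset {S E : Set α} (hS : S.Finite) (hE : E.Infinite) :
    ∃ τ ∈ Subgroup.closure {σ : Perm α | σ.IsSwap}, τ '' S ⊆ E := by
  induction S, hS using Set.Finite.induction_on with
  | empty => exact ⟨1, one_mem _, by simp⟩
  | @insert a S haS hS ih =>
    obtain ⟨τ, hτ, hτS⟩ := ih
    obtain ⟨e, heE, he⟩ := hE.exists_notMem_finite ((hS.insert a).image τ)
    have hae : τ a ≠ e := fun h => he ⟨a, Set.mem_insert a S, h⟩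
    refine ⟨swap (τ a) e * τ, mul_mem (Subgroup.subset_closure (swap_isSwap_iff.mpr hae)) hτ, ?_⟩
    rw [Set.image_subset_iff]
    rintro x (rfl | hx)
    · simpa using heE
    · have hxa : τ x ≠ τ a := τ.injective.ne (ne_of_mem_of_not_mem hx haS)
      have hxe : τ x ≠ e := fun h => he ⟨x, Set.mem_insert_of_mem a hx, h⟩
      simpa [swap_apply_of_ne_of_ne hxa hxe] using hτS ⟨x, hx, rfl⟩

theorem exists_mem_closure_isSwap_conj_mem_fixingSubgroup {σ : Perm α}
    (hσ : (fixedBy α σ)ᶜ.Finite) {E : Set α} (hE : E.Infinite) :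
    ∃ τ ∈ Subgroup.closure {σ : Perm α | σ.IsSwap}, τ * σ * τ⁻¹ ∈ fixingSubgroup (Perm α) Eᶜ := by
  obtain ⟨τ, hτ, hτE⟩ := exists_mem_closure_isSwap_image_subset hσ hE
  refine ⟨τ, hτ, ?_⟩
  rw [mem_fixingSubgroup_compl_iff_movedBy_subset, ← smul_fixedBy, ← Set.smul_set_compl]
  exact hτE

end Equiv.Perm

theorem finitelySupportedPerms_eq_closure_isSwap :
    finitelySupportedPerms = Subgroup.closure {σ : Perm ℕ | σ.IsSwap} := by
  ext σ
  exact mem_closure_isSwap'.symm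

/-- The group of finitely supported permutations of `ℕ` is not invariably
generated: the subgroup of permutations supported on the even numbers is a
proper subgroup meeting every conjugacy class. -/
theorem finitelySupportedPerms_not_invariably_generated :
    ∃ H : Subgroup finitelySupportedPerms,
      (H : Set finitelySupportedPerms) =
        {σ : finitelySupportedPerms | ∀ n : ℕ, ¬ Even n → (σ : Equiv.Perm ℕ) n = n} ∧
      H ≠ ⊤ ∧ ∀ g : finitelySupportedPerms, ∃ h ∈ H, IsConj g h := by
  refine ⟨(fixingSubgroup (Perm ℕ) {n | ¬ Even n}).comap finitelySupportedPerms.subtype,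
    Set.ext fun _ => mem_fixingSubgroup_iff _, ?_, fun g => ?_⟩
  · have hswap : swap 0 1 ∈ finitelySupportedPerms := finite_compl_fixedBy_swap
    intro htop
    have := (mem_fixingSubgroup_iff _).mp ((Subgroup.eq_top_iff' _).mp htop ⟨swap 0 1, hswap⟩) 1
      Nat.not_even_one
    simp at this
  · have hevens : {n : ℕ | Even n}.Infinite :=
      Set.infinite_of_forall_exists_gt fun n => ⟨2 * n + 2, even_two_mul (n + 1), by omega⟩
    obtain ⟨τ, hτ, hconj⟩ := Perm.exists_mem_closure_isSwap_conj_mem_fixingSubgroup g.2 hevens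
    rw [← finitelySupportedPerms_eq_closure_isSwap] at hτ
    exact ⟨⟨τ, hτ⟩ * g * ⟨τ, hτ⟩⁻¹, hconj, isConj_iff.mpr ⟨⟨τ, hτ⟩, rfl⟩⟩
end

section
/- Every group with exactly one non-trivial conjugacy class and order greater than 2 is not invariably generated. -/
open Subgroup

theorem Subgroup.mem_center_of_zpowers_eq_top {G : Type*} [Group G] {x : G}
    (h : zpowers x = ⊤) : x ∈ center G := by
  refine mem_center_iff.2 fun g => ?_
  obtain ⟨n, rfl⟩ : g ∈ zpowers x := h ▸ mem_top g
  exact Commute.zpow_self x n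

theorem IsConj.zpowers_ne_top {G : Type*} [Group G] {x y : G} (h : IsConj x y) (hxy : x ≠ y) :
    zpowers x ≠ ⊤ :=
  fun htop => hxy (h.eq_of_left_mem_center (mem_center_of_zpowers_eq_top htop))

theorem Subgroup.exists_mem_isConj_of_ne_one_mem {G : Type*} [Group G]
    (hconj : ∀ g h : G, g ≠ 1 → h ≠ 1 → IsConj g h) {H : Subgroup G} {x : G} (hx : x ≠ 1)
    (hxH : x ∈ H) (g : G) : ∃ h ∈ H, IsConj g h := by
  by_cases hg : g = 1
  · exact ⟨1, H.one_mem, hg ▸ IsConj.refl _⟩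
  · exact ⟨x, hxH, hconj g x hg hx⟩

/-- A group with exactly one non-trivial conjugacy class and more than two
elements is not invariably generated: some proper subgroup meets every
conjugacy class. -/
theorem single_conjugacy_class_not_invariably_generated
    (G : Type*) [Group G]
    (hconj : ∀ g h : G, g ≠ 1 → h ≠ 1 → IsConj g h)
    (hcard : ∃ x y : G, x ≠ 1 ∧ y ≠ 1 ∧ x ≠ y) :
    ∃ H : Subgroup G, H ≠ ⊤ ∧ ∀ g : G, ∃ h ∈ H, IsConj g h := by
  obtain ⟨x, y, hx, hy, hxy⟩ := hcard
  exact ⟨zpowers x, (hconj x y hx hy).zpowers_ne_top hxy,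
    exists_mem_isConj_of_ne_one_mem hconj hx (mem_zpowers x)⟩
end

section
/- Main Proposition (wandering complement): let Γ act minimally as a non-elementary convergence group on a compact metrizable space X. Then for every element γ ∈ Γ of infinite order there exist sets Ω⁺, Ω⁻ ⊆ X such that γⁿ·(X \ Ω⁻) ⊆ Ω⁺ for all n ≥ 1, and X \ (Ω⁻ ∪ Ω⁺) has non-empty interior. In particular X \ (Ω⁻ ∪ Ω⁺) is γ-wandering: its translates γⁿ·(X \ (Ω⁻ ∪ Ω⁺)), n ∈ ℤ, are pairwise disjoint. -/
/-!
A point `x` other than the attracting and the repelling point has a neighbourhood `U` that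
`γⁿ` pushes into a neighbourhood of the attracting point disjoint from `U` for all large `n`;
in particular `x` is not periodic, so each of the finitely many remaining powers also moves a
small neighbourhood of `x` off itself. The intersection `O` of these neighbourhoods is a
wandering open set; take `Ω⁻ = Oᶜ` and `Ω⁺ = ⋃_{n ≥ 1} γⁿ O`, so that `X \ (Ω⁻ ∪ Ω⁺) = O`.
-/

open Pointwise

/-- The space of ordered triples of pairwise distinct points of `X`. -/
def distinctTriples (X : Type*) : Set (X × X × X) :=
  {p | p.1 ≠ p.2.1 ∧ p.1 ≠ p.2.2 ∧ p.2.1 ≠ p.2.2}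

/-- A convergence action: an action by homeomorphisms such that the induced
action on the space of ordered triples of pairwise distinct points is
properly discontinuous. -/
def IsConvergenceAction (Γ X : Type*) [Group Γ] [TopologicalSpace X]
    [MulAction Γ X] : Prop :=
  (∀ g : Γ, Continuous fun x : X => g • x) ∧
  ∀ K L : Set (X × X × X), K ⊆ distinctTriples X → L ⊆ distinctTriples X →
    IsCompact K → IsCompact L →
    {g : Γ | ((fun p : X × X × X => (g • p.1, g • p.2.1, g • p.2.2)) '' K ∩ L).Nonempty}.Finite

/-- A minimal action: every orbit is dense. -/
def IsMinimalAction (Γ X : Type*) [Group Γ] [TopologicalSpace X]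
    [MulAction Γ X] : Prop :=
  ∀ x : X, Dense (MulAction.orbit Γ x)

/-- A non-elementary action: the acting group is infinite and there is no
non-empty invariant subset with at most two points. -/
def IsNonElementaryAction (Γ X : Type*) [Group Γ] [MulAction Γ X] : Prop :=
  Infinite Γ ∧
  ¬ ∃ S : Set X, S.Nonempty ∧ (∃ a b : X, S ⊆ {a, b}) ∧ ∀ g : Γ, g • S = S

open Filter Topology Set Function

lemma exists_ne_and_ne_of_pairwise_ne {α : Type*} {a b c : α} (hab : a ≠ b) (hac : a ≠ c)
    (hbc : b ≠ c) (p r : α) : ∃ x, x ≠ p ∧ x ≠ r := by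
  by_contra! h
  rcases eq_or_ne a p with rfl | hap
  · exact hbc ((h b hab.symm).trans (h c hac.symm).symm)
  · rcases eq_or_ne b p with rfl | hbp
    · exact hac ((h a hap).trans (h c hbc.symm).symm)
    · exact hab ((h a hap).trans (h b hbp).symm)

section WanderingNeighbourhood

variable {M X : Type*} [Monoid M] [MulAction M X]

lemma pow_smul_ne_self_of_forall_ge_disjoint {g : M} {x : X} {U : Set X} (hx : x ∈ U) {n₀ : ℕ}
    (hfar : ∀ n ≥ n₀, Disjoint (g ^ n • U) U) {k : ℕ} (hk : 1 ≤ k) : g ^ k • x ≠ x := by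
  intro hfix
  have hperiodic : g ^ (k * n₀) • x = x := by
    have := (show IsFixedPt (g ^ k • ·) x from hfix).iterate n₀
    simpa [IsFixedPt, smul_iterate, ← pow_mul] using this
  have hmem : x ∈ g ^ (k * n₀) • U := hperiodic ▸ smul_mem_smul_set hx
  exact disjoint_left.1 (hfar _ (Nat.le_mul_of_pos_left n₀ hk)) hmem hx

variable [TopologicalSpace X]

lemma eventually_smallSets_disjoint_smul [T2Space X] [ContinuousConstSMul M X] {a : M} {x : X}
    (h : a • x ≠ x) : ∀ᶠ V in (𝓝 x).smallSets, Disjoint (a • V) V := by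
  obtain ⟨W, V, hW, hV, hWV⟩ := t2_separation_nhds h
  rw [eventually_smallSets' fun s t hst hd => hd.mono (smul_set_mono hst) hst]
  refine ⟨V ∩ (a • ·) ⁻¹' W,
    inter_mem hV ((continuous_const_smul a).continuousAt.preimage_mem_nhds hW), ?_⟩
  exact hWV.mono (smul_set_subset_iff.2 fun _ hy => hy.2) inter_subset_left

lemma exists_mem_nhds_forall_ge_disjoint_pow_smul [T2Space X] {g : M} {p r x : X}
    (hxp : x ≠ p) (hxr : x ≠ r)
    (hdyn : ∀ R ∈ 𝓝 r, ∀ A ∈ 𝓝 p, ∃ n₀ : ℕ, ∀ n ≥ n₀, ∀ y : X, y ∉ R → g ^ n • y ∈ A) :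
    ∃ U ∈ 𝓝 x, ∃ n₀ : ℕ, ∀ n ≥ n₀, Disjoint (g ^ n • U) U := by
  obtain ⟨U₁, A, hU₁, hA, hU₁A⟩ := t2_separation_nhds hxp
  obtain ⟨U₂, R, hU₂, hR, hU₂R⟩ := t2_separation_nhds hxr
  obtain ⟨n₀, hn₀⟩ := hdyn R hR A hA
  refine ⟨U₁ ∩ U₂, inter_mem hU₁ hU₂, n₀, fun n hn => ?_⟩
  refine (hU₁A.symm.mono_left ?_).mono_right inter_subset_left
  exact smul_set_subset_iff.2 fun y hy => hn₀ n hn y (disjoint_left.1 hU₂R hy.2)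

lemma exists_mem_nhds_forall_disjoint_pow_smul [T2Space X] [ContinuousConstSMul M X]
    {g : M} {x : X} {U : Set X} (hU : U ∈ 𝓝 x) {n₀ : ℕ}
    (hfar : ∀ n ≥ n₀, Disjoint (g ^ n • U) U) :
    ∃ O ∈ 𝓝 x, ∀ n ≥ 1, Disjoint (g ^ n • O) O := by
  have hnear : ∀ᶠ V in (𝓝 x).smallSets, ∀ n ∈ Finset.Ico 1 n₀, Disjoint (g ^ n • V) V :=
    (eventually_all_finset _).2 fun n hn => eventually_smallSets_disjoint_smul <|
      pow_smul_ne_self_of_forall_ge_disjoint (mem_of_mem_nhds hU) hfar (Finset.mem_Ico.1 hn).1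
  obtain ⟨O, hO, hOgood⟩ := eventually_smallSets.1 ((eventually_smallSets_subset.2 hU).and hnear)
  obtain ⟨hOU, hOnear⟩ := hOgood O subset_rfl
  refine ⟨O, hO, fun n hn => ?_⟩
  rcases lt_or_ge n n₀ with hlt | hge
  · exact hOnear n (Finset.mem_Ico.2 ⟨hn, hlt⟩)
  · exact (hfar n hge).mono (smul_set_mono hOU) hOU

end WanderingNeighbourhood

lemma pairwise_disjoint_zpow_smul {G α : Type*} [Group G] [MulAction G α] {g : G} {W : Set α}
    (hW : ∀ n ≥ 1, Disjoint (g ^ n • W) W) :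
    Pairwise (Disjoint on fun n : ℤ => g ^ n • W) := by
  refine (pairwise_disjoint_on _).2 fun m n hmn => ?_
  obtain ⟨k, hk⟩ := Int.eq_ofNat_of_zero_le (sub_nonneg.2 hmn.le)
  rw [show n = m + k by omega, zpow_add, mul_smul, disjoint_smul_set, zpow_natCast]
  exact (hW k (by omega)).symm

theorem convergence_wandering_complement_general (Γ X : Type*) [Group Γ]
    [TopologicalSpace X] [TopologicalSpace.MetrizableSpace X]
    [MulAction Γ X]
    (hconv : IsConvergenceAction Γ X)
    (hcard : ∃ a b c : X, a ≠ b ∧ a ≠ c ∧ b ≠ c)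
    (γ : Γ)
    (p r : X)
    (hdyn : ∀ R ∈ nhds r, ∀ A ∈ nhds p,
      ∃ n₀ : ℕ, ∀ n ≥ n₀, ∀ x : X, x ∉ R → γ ^ n • x ∈ A) :
    ∃ Ωplus Ωminus : Set X,
      (∀ n : ℕ, 1 ≤ n → γ ^ n • (Set.univ \ Ωminus) ⊆ Ωplus) ∧
      (interior (Set.univ \ (Ωminus ∪ Ωplus))).Nonempty ∧
      (∀ m n : ℤ, m ≠ n →
        Disjoint (γ ^ m • (Set.univ \ (Ωminus ∪ Ωplus)))
          (γ ^ n • (Set.univ \ (Ωminus ∪ Ωplus)))) := by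
  have : ContinuousConstSMul Γ X := ⟨hconv.1⟩
  obtain ⟨a, b, c, hab, hac, hbc⟩ := hcard
  obtain ⟨x, hxp, hxr⟩ := exists_ne_and_ne_of_pairwise_ne hab hac hbc p r
  obtain ⟨U, hU, n₀, hfar⟩ := exists_mem_nhds_forall_ge_disjoint_pow_smul hxp hxr hdyn
  obtain ⟨O, hO, hwander⟩ := exists_mem_nhds_forall_disjoint_pow_smul hU hfar
  have hdisj : Disjoint O (⋃ n ≥ 1, γ ^ n • O) :=
    disjoint_iUnion₂_right.2 fun n hn => (hwander n hn).symm
  have hcompl : univ \ (Oᶜ ∪ ⋃ n ≥ 1, γ ^ n • O) = O := by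
    rw [← compl_eq_univ_sdiff, compl_union, compl_compl, inter_eq_left.2 hdisj.subset_compl_right]
  refine ⟨⋃ n ≥ 1, γ ^ n • O, Oᶜ, fun n hn => ?_, ?_, ?_⟩
  · rw [← compl_eq_univ_sdiff, compl_compl]
    exact subset_iUnion₂_of_subset n hn subset_rfl
  · rw [hcompl]
    exact ⟨x, mem_interior_iff_mem_nhds.2 hO⟩
  · rw [hcompl]
    exact fun _ _ hmn => pairwise_disjoint_zpow_smul hwander hmn

/-- Main Proposition: for a minimal non-elementary convergence action and an
element `γ` of infinite order with attracting point `p` and repelling point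
`r`, there are sets `Ω⁺, Ω⁻` with `γⁿ (X \\ Ω⁻) ⊆ Ω⁺` for all `n ≥ 1` such
that the complement `X \\ (Ω⁻ ∪ Ω⁺)` has non-empty interior; in particular it
is `γ`-wandering: its `γ`-translates are pairwise disjoint. -/
theorem convergence_wandering_complement (Γ X : Type*) [Group Γ]
    [TopologicalSpace X] [CompactSpace X] [TopologicalSpace.MetrizableSpace X]
    [MulAction Γ X]
    (hconv : IsConvergenceAction Γ X)
    (hmin : IsMinimalAction Γ X)
    (hne : IsNonElementaryAction Γ X)
    (hcard : ∃ a b c : X, a ≠ b ∧ a ≠ c ∧ b ≠ c)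
    (γ : Γ) (hγ : ¬ IsOfFinOrder γ)
    (p r : X) (hp : γ • p = p) (hr : γ • r = r)
    (hconvp : ∀ x : X, x ≠ r → ∀ U ∈ nhds p, ∃ n₀ : ℕ, ∀ n ≥ n₀, γ ^ n • x ∈ U)
    (hdyn : ∀ R ∈ nhds r, ∀ A ∈ nhds p,
      ∃ n₀ : ℕ, ∀ n ≥ n₀, ∀ x : X, x ∉ R → γ ^ n • x ∈ A) :
    ∃ Ωplus Ωminus : Set X,
      (∀ n : ℕ, 1 ≤ n → γ ^ n • (Set.univ \ Ωminus) ⊆ Ωplus) ∧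
      (interior (Set.univ \ (Ωminus ∪ Ωplus))).Nonempty ∧
      (∀ m n : ℤ, m ≠ n →
        Disjoint (γ ^ m • (Set.univ \ (Ωminus ∪ Ωplus)))
          (γ ^ n • (Set.univ \ (Ωminus ∪ Ωplus)))) :=
  convergence_wandering_complement_general Γ X hconv hcard γ p r hdyn
end

section
/- Placement lemma: let Γ act minimally as a non-elementary convergence group on a compact metrizable space X. Given a proper closed subset Σ ⊊ X and a non-empty open subset O ⊆ X, there exists δ ∈ Γ with δ·Σ ⊆ O. -/
open Pointwise

/-!
Fix a non-principal ultrafilter `𝒰` on `Γ` and take the limit along `𝒰` of the graphs of the maps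
`x ↦ g • x`: a relation on `X` that is total in both directions by compactness. Proper
discontinuity on distinct triples forbids three limit pairs with pairwise distinct first and
pairwise distinct second coordinates, and a König-type argument then gives points `a`, `b` such
that every limit pair `(x, y)` has `x = a` or `y = b`. Hence some `g` maps the complement of any
neighbourhood of `a` into any neighbourhood of `b`. By minimality there are `γ`, `η` with
`γ • a ∉ Σ` and `η • b ∈ O`, and then `η * g * γ⁻¹` moves `Σ` into `O`.
-/

open Filter Topology

section Combinatorics

variable {X : Type*}

theorem exists_ne_and_ne (h3 : ∃ a b c : X, a ≠ b ∧ a ≠ c ∧ b ≠ c) (p q : X) :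
    ∃ t, t ≠ p ∧ t ≠ q := by
  obtain ⟨a, b, c, hab, hac, hbc⟩ := h3
  by_contra! h
  have h' (t : X) : t = p ∨ t = q := or_iff_not_imp_left.2 (h t)
  have := h' a; have := h' b; have := h' c
  grind

def NoThreeMatching (r : X → X → Prop) : Prop :=
  ∀ x₁ y₁ x₂ y₂ x₃ y₃, r x₁ y₁ → r x₂ y₂ → r x₃ y₃ →
    x₁ ≠ x₂ → x₁ ≠ x₃ → x₂ ≠ x₃ → y₁ = y₂ ∨ y₁ = y₃ ∨ y₂ = y₃

variable {r : X → X → Prop}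

theorem NoThreeMatching.eq_or_eq_of_cross (hr : NoThreeMatching r) {x y x' y' t s' : X}
    (hxy : r x y) (hxy' : r x' y') (hxt : r x t) (hs'y' : r s' y') (hx : x ≠ x') (hy : y ≠ y')
    (hty : t ≠ y) (hty' : t ≠ y') (hs'x : s' ≠ x) (hs'x' : s' ≠ x') {p q : X} (hpq : r p q) :
    p = x ∨ q = y' := by
  by_contra! h
  by_cases hp : p = s' <;> by_cases hq : q = t
  · subst hp hq; have := hr _ _ _ _ _ _ hxy hpq hxy'; grind
  · subst hp; have := hr _ _ _ _ _ _ hxt hpq hxy'; grind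
  · subst hq; have := hr _ _ _ _ _ _ hpq hs'y' hxy; grind
  · have := hr _ _ _ _ _ _ hxt hs'y' hpq; grind

/-- König's theorem for matchings of size two; covers by two points on the same side are ruled out
because both projections of `r` are onto. -/
theorem NoThreeMatching.exists_cover (hr : NoThreeMatching r) (hdom : ∀ x, ∃ y, r x y)
    (hcod : ∀ y, ∃ x, r x y) (h3 : ∃ a b c : X, a ≠ b ∧ a ≠ c ∧ b ≠ c) :
    ∃ a b, ∀ x y, r x y → x = a ∨ y = b := by
  by_cases hpair : ∃ x y x' y', r x y ∧ r x' y' ∧ x ≠ x' ∧ y ≠ y'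
  · obtain ⟨x, y, x', y', hxy, hxy', hx, hy⟩ := hpair
    obtain ⟨t, hty, hty'⟩ := exists_ne_and_ne h3 y y'
    obtain ⟨s, hst⟩ := hcod t
    obtain ⟨s', hs'x, hs'x'⟩ := exists_ne_and_ne h3 x x'
    obtain ⟨t', hs't'⟩ := hdom s'
    have hs : s = x ∨ s = x' := by
      by_contra! h
      grind [hr _ _ _ _ _ _ hxy hxy' hst hx h.1.symm h.2.symm]
    have ht' : t' = y ∨ t' = y' := by
      by_contra! h
      grind [hr _ _ _ _ _ _ hxy hxy' hs't' hx hs'x.symm hs'x'.symm]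
    -- If `s` and `t'` lie on the same edge of the matching we get a three-edge matching;
    -- otherwise they form the cover.
    rcases hs with rfl | rfl <;> rcases ht' with rfl | rfl
    · grind [hr _ _ _ _ _ _ hst hs't' hxy' hs'x.symm hx hs'x']
    · exact ⟨_, _, fun _ _ => hr.eq_or_eq_of_cross hxy hxy' hst hs't' hx hy hty hty' hs'x hs'x'⟩
    · exact ⟨_, _, fun _ _ => hr.eq_or_eq_of_cross hxy' hxy hst hs't' hx.symm hy.symm hty' hty
        hs'x' hs'x⟩
    · grind [hr _ _ _ _ _ _ hst hs't' hxy hs'x'.symm hx.symm hs'x]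
  · push Not at hpair
    obtain ⟨a, -⟩ := h3
    obtain ⟨b, hb⟩ := hdom a
    exact ⟨a, b, fun x y hxy =>
      or_iff_not_imp_left.2 fun hx => (hpair _ _ _ _ hb hxy (Ne.symm hx)).symm⟩

end Combinatorics

theorem isOpen_distinctTriples (X : Type*) [TopologicalSpace X] [T2Space X] :
    IsOpen (distinctTriples X) :=
  (isOpen_ne_fun continuous_fst continuous_snd.fst).inter
    ((isOpen_ne_fun continuous_fst continuous_snd.snd).inter
      (isOpen_ne_fun continuous_snd.fst continuous_snd.snd))

theorem Ultrafilter.exists_tendsto {α X : Type*} [TopologicalSpace X] [CompactSpace X]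
    (𝒰 : Ultrafilter α) (f : α → X) : ∃ x, Tendsto f 𝒰 (𝓝 x) :=
  ⟨_, (𝒰.map f).le_nhds_lim⟩

section LimitPairs

variable {Γ X : Type*} [Group Γ] [TopologicalSpace X] [MulAction Γ X]

/-- The limit pairs along `l` form the limit of the graphs of the maps `x ↦ g • x` as `g → l`. -/
def IsLimitPair (l : Filter Γ) (x y : X) : Prop :=
  ∃ ξ : Γ → X, Tendsto ξ l (𝓝 x) ∧ Tendsto (fun g => g • ξ g) l (𝓝 y)

theorem exists_isLimitPair_left [CompactSpace X] (𝒰 : Ultrafilter Γ) (x : X) :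
    ∃ y, IsLimitPair (𝒰 : Filter Γ) x y :=
  let ⟨y, hy⟩ := 𝒰.exists_tendsto fun g : Γ => g • x
  ⟨y, fun _ => x, tendsto_const_nhds, hy⟩

theorem exists_isLimitPair_right [CompactSpace X] (𝒰 : Ultrafilter Γ) (y : X) :
    ∃ x, IsLimitPair (𝒰 : Filter Γ) x y :=
  let ⟨x, hx⟩ := 𝒰.exists_tendsto fun g : Γ => g⁻¹ • y
  ⟨x, fun g => g⁻¹ • y, hx, by simpa using tendsto_const_nhds⟩

theorem IsConvergenceAction.noThreeMatching_isLimitPair [T2Space X] [LocallyCompactSpace X]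
    (hconv : IsConvergenceAction Γ X) {l : Filter Γ} [l.NeBot] (hl : l ≤ cofinite) :
    NoThreeMatching (IsLimitPair (X := X) l) := by
  rintro x₁ y₁ x₂ y₂ x₃ y₃ ⟨ξ₁, hξ₁, hgξ₁⟩ ⟨ξ₂, hξ₂, hgξ₂⟩ ⟨ξ₃, hξ₃, hgξ₃⟩ hx₁₂ hx₁₃ hx₂₃
  by_contra! hy
  obtain ⟨K, hK, hxK, hKsub⟩ := exists_compact_subset (isOpen_distinctTriples X)
    (show (x₁, x₂, x₃) ∈ distinctTriples X from ⟨hx₁₂, hx₁₃, hx₂₃⟩)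
  obtain ⟨L, hL, hyL, hLsub⟩ := exists_compact_subset (isOpen_distinctTriples X)
    (show (y₁, y₂, y₃) ∈ distinctTriples X from hy)
  have hK_ev : ∀ᶠ g in l, (ξ₁ g, ξ₂ g, ξ₃ g) ∈ K :=
    (hξ₁.prodMk_nhds (hξ₂.prodMk_nhds hξ₃)) (mem_interior_iff_mem_nhds.1 hxK)
  have hL_ev : ∀ᶠ g in l, (g • ξ₁ g, g • ξ₂ g, g • ξ₃ g) ∈ L :=
    (hgξ₁.prodMk_nhds (hgξ₂.prodMk_nhds hgξ₃)) (mem_interior_iff_mem_nhds.1 hyL)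
  have hfin := hconv.2 K L hKsub hLsub hK hL
  obtain ⟨g, ⟨hgK, hgL⟩, hg⟩ := ((hK_ev.and hL_ev).and (hl hfin.compl_mem_cofinite)).exists
  exact hg ⟨_, Set.mem_image_of_mem _ hgK, hgL⟩

theorem eventually_forall_smul_mem_of_isLimitPair [CompactSpace X] (𝒰 : Ultrafilter Γ)
    {a b : X} (hab : ∀ x y, IsLimitPair (𝒰 : Filter Γ) x y → x = a ∨ y = b)
    {R A : Set X} (hR : R ∈ 𝓝 a) (hA : A ∈ 𝓝 b) :
    ∀ᶠ g in (𝒰 : Filter Γ), ∀ x ∉ R, g • x ∈ A := by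
  by_contra h
  rw [← Ultrafilter.eventually_not] at h
  push Not at h
  obtain ⟨ξ, hξ⟩ := h.choice
  obtain ⟨p, hp⟩ := 𝒰.exists_tendsto ξ
  obtain ⟨q, hq⟩ := 𝒰.exists_tendsto fun g => g • ξ g
  rcases hab p q ⟨ξ, hp, hq⟩ with rfl | rfl
  · obtain ⟨g, ⟨hgR, -⟩, hgR'⟩ := (hξ.and (hp hR)).exists
    exact hgR hgR'
  · obtain ⟨g, ⟨-, hgA⟩, hgA'⟩ := (hξ.and (hq hA)).exists
    exact hgA hgA'

theorem IsConvergenceAction.exists_collapsing [CompactSpace X] [T2Space X] [Infinite Γ]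
    (hconv : IsConvergenceAction Γ X) (h3 : ∃ a b c : X, a ≠ b ∧ a ≠ c ∧ b ≠ c) :
    ∃ a b : X, ∀ R ∈ 𝓝 a, ∀ A ∈ 𝓝 b, ∃ g : Γ, ∀ x ∉ R, g • x ∈ A := by
  let 𝒰 : Ultrafilter Γ := .of cofinite
  obtain ⟨a, b, hab⟩ :=
    (hconv.noThreeMatching_isLimitPair (Ultrafilter.of_le cofinite)).exists_cover
      (exists_isLimitPair_left 𝒰) (exists_isLimitPair_right 𝒰) h3
  exact ⟨a, b, fun R hR A hA => (eventually_forall_smul_mem_of_isLimitPair 𝒰 hab hR hA).exists⟩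

theorem exists_smul_subset_of_collapsing [ContinuousConstSMul Γ X] [MulAction.IsMinimal Γ X]
    {a b : X} (hab : ∀ R ∈ 𝓝 a, ∀ A ∈ 𝓝 b, ∃ g : Γ, ∀ x ∉ R, g • x ∈ A)
    {S O : Set X} (hS : IsClosed S) (hS_ne : S ≠ Set.univ) (hO : IsOpen O) (hO_ne : O.Nonempty) :
    ∃ δ : Γ, δ • S ⊆ O := by
  obtain ⟨γ, hγ⟩ := hS.isOpen_compl.exists_smul_mem Γ a (Set.nonempty_compl.2 hS_ne)
  obtain ⟨η, hη⟩ := hO.exists_smul_mem Γ b hO_ne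
  obtain ⟨g, hg⟩ := hab _ ((hS.isOpen_compl.smul γ⁻¹).mem_nhds (Set.mem_inv_smul_set_iff.2 hγ))
    _ ((hO.smul η⁻¹).mem_nhds (Set.mem_inv_smul_set_iff.2 hη))
  refine ⟨η * g * γ⁻¹, ?_⟩
  rintro _ ⟨σ, hσ, rfl⟩
  have := hg (γ⁻¹ • σ) (by simpa [Set.mem_inv_smul_set_iff] using hσ)
  simpa [mul_smul, Set.mem_inv_smul_set_iff] using this

end LimitPairs

/-- Placement lemma: in a minimal non-elementary convergence action, any
proper closed subset can be moved into any non-empty open subset by some group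
element. -/
theorem convergence_placement (Γ X : Type*) [Group Γ]
    [TopologicalSpace X] [CompactSpace X] [TopologicalSpace.MetrizableSpace X]
    [MulAction Γ X]
    (hconv : IsConvergenceAction Γ X)
    (hmin : IsMinimalAction Γ X)
    (hne : IsNonElementaryAction Γ X)
    (hcard : ∃ a b c : X, a ≠ b ∧ a ≠ c ∧ b ≠ c)
    (Sig : Set X) (hSc : IsClosed Sig) (hSne : Sig ≠ Set.univ)
    (O : Set X) (hO : IsOpen O) (hOne : O.Nonempty) :
    ∃ δ : Γ, δ • Sig ⊆ O := by
  have : Infinite Γ := hne.1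
  have : ContinuousConstSMul Γ X := ⟨hconv.1⟩
  have : MulAction.IsMinimal Γ X := ⟨hmin⟩
  obtain ⟨a, b, hab⟩ := hconv.exists_collapsing hcard
  exact exists_smul_subset_of_collapsing hab hSc hSne hO hOne
end

section
/- Density of loxodromic axes: if Γ is a non-elementary convergence group acting minimally on X and g ∈ Γ is loxodromic, then for any disjoint non-empty open sets U, V ⊆ X with U ∪ V ≠ X, there is a loxodromic element h ∈ Γ with h⁺ ∈ U and h⁻ ∈ V; in particular the set of pairs (h⁻, h⁺) over loxodromic h is dense in X × X. -/
open Pointwise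

/-- `g` is loxodromic with attracting point `p` and repelling point `m`:
`p ≠ m` are fixed by `g` and iterates of `g` attract the complement of any
neighbourhood of `m` into any neighbourhood of `p`. -/
def IsLoxodromic {Γ X : Type*} [Group Γ] [TopologicalSpace X] [MulAction Γ X]
    (g : Γ) (p m : X) : Prop :=
  p ≠ m ∧ g • p = p ∧ g • m = m ∧
  ∀ R ∈ nhds m, ∀ A ∈ nhds p,
    ∃ n₀ : ℕ, ∀ n ≥ n₀, ∀ x : X, x ∉ R → g ^ n • x ∈ A

/-!
Minimality moves the attracting and repelling points of `g` into `U` and `V`, so that some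
`h = α * g ^ n * β⁻¹` maps `X \ V` into `U`. This ping-pong condition alone makes `h` loxodromic.
The nested compact sets `hⁿ(X \ V)` shrink to an `h`-invariant set `K ⊆ U`, and `K` is a point:
given `a ≠ a'` in `K` and `z ∉ U ∪ V`, every `hⁿz` stays away from `a` or from `a'`, say from `b`,
and then `hⁿ` carries the triple `(h⁻ⁿb, h⁻ⁿz, z)` of the compact set `K × h⁻¹(X \ U) × {z}` to
the triple `(b, z, hⁿz)` of a compact set of distinct triples, for infinitely many `n`,
contradicting the convergence property. Symmetrically `h⁻¹` shrinks `X \ U` to a point of `V`,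
and every point outside a neighbourhood of that point enters `X \ V` after boundedly many steps.
-/

open Set Filter Topology

section Dynamics

variable {Γ X : Type*} [Group Γ] [MulAction Γ X]

def attractor (h : Γ) (C : Set X) : Set X := ⋂ n : ℕ, h ^ n • C

section Algebra

variable {h : Γ}

lemma antitone_pow_smul {C : Set X} (hC : h • C ⊆ C) : Antitone fun n : ℕ => h ^ n • C :=
  antitone_nat_of_succ_le fun n => by
    rw [pow_succ, mul_smul]
    exact smul_set_mono hC

lemma pow_succ_smul_mem {C : Set X} (hC : h • C ⊆ C) {x : X} (hx : x ∈ C) (n : ℕ) :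
    h ^ (n + 1) • x ∈ h • C := by
  simpa using antitone_pow_smul hC (Nat.le_add_left 1 n) (smul_mem_smul_set hx)

lemma attractor_subset_smul (C : Set X) : attractor h C ⊆ h • C :=
  fun _ hx => by simpa using mem_iInter.1 hx 1

lemma inv_pow_smul_mem_attractor {C : Set X} {x : X} (hx : x ∈ attractor h C) (n : ℕ) :
    (h ^ n)⁻¹ • x ∈ attractor h C := by
  refine mem_iInter.2 fun k => ?_
  rw [mem_smul_set_iff_inv_smul_mem, smul_smul, ← mul_inv_rev, ← pow_add,
    ← mem_smul_set_iff_inv_smul_mem]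
  exact mem_iInter.1 hx _

lemma smul_eq_of_attractor_eq_singleton {C : Set X} {p : X} (hp : attractor h C = {p}) :
    h • p = p := by
  have := inv_pow_smul_mem_attractor (hp ▸ mem_singleton p) 1
  rw [hp, pow_one, mem_singleton_iff, inv_smul_eq_iff] at this
  exact this.symm

variable {U V : Set X}

lemma inv_smul_compl_subset (hh : h • Vᶜ ⊆ U) : h⁻¹ • Uᶜ ⊆ V := by
  rintro _ ⟨x, hx, rfl⟩
  by_contra hxV
  exact hx (by simpa using hh (smul_mem_smul_set hxV))

lemma not_isOfFinOrder_of_smul_compl_subset (hUV : Disjoint U V) (hh : h • Vᶜ ⊆ U) {z : X}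
    (hzU : z ∉ U) (hzV : z ∉ V) : ¬IsOfFinOrder h := by
  rw [isOfFinOrder_iff_pow_eq_one]
  rintro ⟨n, hn, hpow⟩
  obtain ⟨k, rfl⟩ := Nat.exists_eq_add_one_of_ne_zero hn.ne'
  apply hzU
  simpa [hpow] using hh (pow_succ_smul_mem (hh.trans hUV.subset_compl_right) hzV k)

end Algebra

variable [TopologicalSpace X]

lemma IsConvergenceAction.finite_setOf_pow_smul_mem (hconv : IsConvergenceAction Γ X) {h : Γ}
    (hh : ¬IsOfFinOrder h) {S T : Set (X × X × X)} (hS : S ⊆ distinctTriples X)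
    (hT : T ⊆ distinctTriples X) (hSc : IsCompact S) (hTc : IsCompact T) :
    {n : ℕ | ∃ t ∈ S, h ^ n • t ∈ T}.Finite :=
  ((hconv.2 S T hS hT hSc hTc).preimage (injective_pow_iff_not_isOfFinOrder.2 hh).injOn).subset
    fun _ ⟨_, htS, htT⟩ => ⟨_, mem_image_of_mem _ htS, htT⟩

variable [ContinuousConstSMul Γ X]

lemma IsLoxodromic.exists_smul_compl_subset {g : Γ} {p m : X} (hg : IsLoxodromic g p m)
    {U V : Set X} (hU : IsOpen U) (hV : IsOpen V) {α β : Γ} (hα : α • p ∈ U)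
    (hβ : β • m ∈ V) : ∃ n : ℕ, (α * g ^ n * β⁻¹) • Vᶜ ⊆ U := by
  obtain ⟨n, hn⟩ := hg.2.2.2
    (β⁻¹ • V) ((hV.smul _).mem_nhds (mem_smul_set_iff_inv_smul_mem.2 (by rwa [inv_inv])))
    (α⁻¹ • U) ((hU.smul _).mem_nhds (mem_smul_set_iff_inv_smul_mem.2 (by rwa [inv_inv])))
  refine ⟨n, ?_⟩
  rintro _ ⟨x, hx, rfl⟩
  have := hn n le_rfl (β⁻¹ • x) (by rwa [smul_mem_smul_set_iff])
  rwa [mem_smul_set_iff_inv_smul_mem, inv_inv, ← mul_smul, ← mul_smul] at this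

lemma isClosed_attractor (h : Γ) {C : Set X} (hC : IsClosed C) : IsClosed (attractor h C) :=
  isClosed_iInter fun _ => hC.smul _

variable [CompactSpace X]

lemma attractor_nonempty {h : Γ} {C : Set X} (hC : IsClosed C) (hCne : C.Nonempty)
    (hhC : h • C ⊆ C) : (attractor h C).Nonempty :=
  IsCompact.nonempty_iInter_of_sequence_nonempty_isCompact_isClosed _
    (fun n => antitone_pow_smul hhC n.le_succ) (fun _ => hCne.smul_set)
    (hC.smul _).isCompact (fun _ => hC.smul _)

lemma eventually_pow_smul_subset {h : Γ} {C A : Set X} (hC : IsClosed C) (hhC : h • C ⊆ C)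
    (hA : ∀ x ∈ attractor h C, A ∈ 𝓝 x) : ∀ᶠ n in atTop, h ^ n • C ⊆ A := by
  obtain ⟨n₀, hn₀⟩ := exists_subset_nhds_of_isCompact' (antitone_pow_smul hhC).directed_ge
    (fun _ => (hC.smul _).isCompact) (fun _ => hC.smul _) hA
  exact eventually_atTop.2 ⟨n₀, fun n hn => (antitone_pow_smul hhC hn).trans hn₀⟩

section PingPong

variable {h : Γ} {U V : Set X} (hU : IsOpen U) (hV : IsOpen V) (hUV : Disjoint U V)
  (hh : h • Vᶜ ⊆ U) {z : X} (hzU : z ∉ U) (hzV : z ∉ V)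
include hU hV hUV hh hzU hzV

lemma finite_setOf_pow_succ_smul_notMem (hconv : IsConvergenceAction Γ X) {b : X} {N : Set X}
    (hb : b ∈ attractor h Vᶜ) (hN : IsOpen N) (hbN : b ∈ N) :
    {n : ℕ | h ^ (n + 1) • z ∉ N}.Finite := by
  have hKU : attractor h Vᶜ ⊆ U := (attractor_subset_smul _).trans hh
  have hh' := inv_smul_compl_subset hh
  have hS : attractor h Vᶜ ×ˢ (h⁻¹ • Uᶜ) ×ˢ {z} ⊆ distinctTriples X := by
    rintro ⟨x, y, w⟩ ⟨hx, hy, rfl : w = z⟩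
    exact ⟨hUV.ne_of_mem (hKU hx) (hh' hy), ne_of_mem_of_not_mem (hKU hx) hzU,
      ne_of_mem_of_not_mem (hh' hy) hzV⟩
  have hT : {b} ×ˢ {z} ×ˢ (h • Vᶜ \ N) ⊆ distinctTriples X := by
    rintro ⟨x, y, w⟩ ⟨rfl : x = b, rfl : y = z, hw, hwN⟩
    exact ⟨ne_of_mem_of_not_mem (hKU hb) hzU, ne_of_mem_of_not_mem hbN hwN,
      (ne_of_mem_of_not_mem (hh hw) hzU).symm⟩
  have hSc : IsCompact (attractor h Vᶜ ×ˢ (h⁻¹ • Uᶜ) ×ˢ {z}) :=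
    (isClosed_attractor h hV.isClosed_compl).isCompact.prod
      ((hU.isClosed_compl.smul _).isCompact.prod isCompact_singleton)
  have hTc : IsCompact ({b} ×ˢ {z} ×ˢ (h • Vᶜ \ N)) := isCompact_singleton.prod
    (isCompact_singleton.prod ((hV.isClosed_compl.smul _).sdiff hN).isCompact)
  have hfin := hconv.finite_setOf_pow_smul_mem
    (not_isOfFinOrder_of_smul_compl_subset hUV hh hzU hzV) hS hT hSc hTc
  refine (hfin.preimage (add_left_injective 1).injOn).subset fun n hn => ?_
  refine ⟨((h ^ (n + 1))⁻¹ • b, (h ^ (n + 1))⁻¹ • z, z),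
    ⟨inv_pow_smul_mem_attractor hb _, ?_, rfl⟩, ?_⟩
  · rw [← inv_pow]
    exact pow_succ_smul_mem (hh'.trans hUV.subset_compl_left) hzU n
  · simp only [Prod.smul_mk, smul_inv_smul]
    exact ⟨rfl, rfl, pow_succ_smul_mem (hh.trans hUV.subset_compl_right) hzV n, hn⟩

lemma attractor_compl_subsingleton [T2Space X] (hconv : IsConvergenceAction Γ X) :
    (attractor h Vᶜ).Subsingleton := by
  intro a ha a' ha'
  by_contra hne
  obtain ⟨N, N', hN, hN', haN, ha'N', hNN'⟩ := t2_separation hne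
  refine infinite_univ (α := ℕ) <| ((finite_setOf_pow_succ_smul_notMem hU hV hUV hh hzU hzV
    hconv ha hN haN).union (finite_setOf_pow_succ_smul_notMem hU hV hUV hh hzU hzV
    hconv ha' hN' ha'N')).subset fun n _ => ?_
  by_contra hn
  rw [mem_union, not_or] at hn
  exact hNN'.ne_of_mem (not_not.1 hn.1) (not_not.1 hn.2) rfl

lemma exists_attractor_compl_eq_singleton [T2Space X] (hconv : IsConvergenceAction Γ X) :
    ∃ p, attractor h Vᶜ = {p} := by
  obtain ⟨p, hp⟩ := attractor_nonempty hV.isClosed_compl ⟨z, hzV⟩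
    (hh.trans hUV.subset_compl_right)
  exact ⟨p, (attractor_compl_subsingleton hU hV hUV hh hzU hzV hconv).eq_singleton_of_mem hp⟩

end PingPong

lemma eventually_pow_smul_compl_subset {h : Γ} {U V R A : Set X} (hU : IsOpen U)
    (hV : IsOpen V) (hUV : Disjoint U V) (hh : h • Vᶜ ⊆ U)
    (hR : ∀ x ∈ attractor h⁻¹ Uᶜ, R ∈ 𝓝 x) (hA : ∀ x ∈ attractor h Vᶜ, A ∈ 𝓝 x) :
    ∀ᶠ n in atTop, h ^ n • Rᶜ ⊆ A := by
  obtain ⟨n₁, hn₁⟩ := (eventually_pow_smul_subset hU.isClosed_compl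
    ((inv_smul_compl_subset hh).trans hUV.subset_compl_left) hR).exists
  have hA' := eventually_pow_smul_subset hV.isClosed_compl (hh.trans hUV.subset_compl_right) hA
  filter_upwards [eventually_ge_atTop n₁, (tendsto_sub_atTop_nat n₁).eventually hA']
    with n hn hnA
  rintro _ ⟨x, hx, rfl⟩
  show h ^ n • x ∈ A
  have hx₁ : h ^ n₁ • x ∈ Vᶜ := fun hxV => hx <| hn₁ <| by
    rw [mem_smul_set_iff_inv_smul_mem, inv_pow, inv_inv]
    exact hUV.subset_compl_left hxV
  rw [← Nat.sub_add_cancel hn, pow_add, mul_smul]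
  exact hnA (smul_mem_smul_set hx₁)

lemma exists_isLoxodromic_of_smul_compl_subset [T2Space X] (hconv : IsConvergenceAction Γ X)
    {h : Γ} {U V : Set X} (hU : IsOpen U) (hV : IsOpen V) (hUV : Disjoint U V)
    (hcover : U ∪ V ≠ univ) (hh : h • Vᶜ ⊆ U) :
    ∃ p m : X, IsLoxodromic h p m ∧ p ∈ U ∧ m ∈ V := by
  obtain ⟨z, hz⟩ := (ne_univ_iff_exists_notMem _).1 hcover
  rw [mem_union, not_or] at hz
  have hh' := inv_smul_compl_subset hh
  obtain ⟨p, hK⟩ := exists_attractor_compl_eq_singleton hU hV hUV hh hz.1 hz.2 hconv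
  obtain ⟨m, hL⟩ := exists_attractor_compl_eq_singleton hV hU hUV.symm hh' hz.2 hz.1 hconv
  have hpU : p ∈ U := hh (attractor_subset_smul _ (hK ▸ mem_singleton p))
  have hmV : m ∈ V := hh' (attractor_subset_smul _ (hL ▸ mem_singleton m))
  refine ⟨p, m, ⟨hUV.ne_of_mem hpU hmV, smul_eq_of_attractor_eq_singleton hK,
    (inv_smul_eq_iff.1 (smul_eq_of_attractor_eq_singleton hL)).symm, fun R hR A hA => ?_⟩,
    hpU, hmV⟩
  obtain ⟨n₀, hn₀⟩ := eventually_atTop.1 (eventually_pow_smul_compl_subset hU hV hUV hh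
    (by simpa [hL] using hR) (by simpa [hK] using hA))
  exact ⟨n₀, fun n hn x hx => hn₀ n hn (smul_mem_smul_set hx)⟩

end Dynamics

theorem loxodromic_axes_dense_general (Γ X : Type*) [Group Γ]
    [TopologicalSpace X] [CompactSpace X] [TopologicalSpace.MetrizableSpace X]
    [MulAction Γ X]
    (hconv : IsConvergenceAction Γ X)
    (hmin : IsMinimalAction Γ X)
    (g : Γ) (pg mg : X) (hg : IsLoxodromic g pg mg)
    (U V : Set X) (hU : IsOpen U) (hV : IsOpen V)
    (hUne : U.Nonempty) (hVne : V.Nonempty) (hUV : Disjoint U V)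
    (hcover : U ∪ V ≠ Set.univ) :
    ∃ (h : Γ) (p m : X), IsLoxodromic h p m ∧ p ∈ U ∧ m ∈ V := by
  have : ContinuousConstSMul Γ X := ⟨hconv.1⟩
  obtain ⟨_, ⟨α, rfl⟩, hα⟩ := (hmin pg).exists_mem_open hU hUne
  obtain ⟨_, ⟨β, rfl⟩, hβ⟩ := (hmin mg).exists_mem_open hV hVne
  obtain ⟨n, hn⟩ := hg.exists_smul_compl_subset hU hV hα hβ
  exact ⟨_, exists_isLoxodromic_of_smul_compl_subset hconv hU hV hUV hcover hn⟩

/-- Density of loxodromic axes: in a minimal non-elementary convergence action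
admitting a loxodromic element, for any disjoint non-empty open sets `U`, `V`
which do not cover `X` there is a loxodromic element with attracting point in
`U` and repelling point in `V`. -/
theorem loxodromic_axes_dense (Γ X : Type*) [Group Γ]
    [TopologicalSpace X] [CompactSpace X] [TopologicalSpace.MetrizableSpace X]
    [MulAction Γ X]
    (hconv : IsConvergenceAction Γ X)
    (hmin : IsMinimalAction Γ X)
    (hne : IsNonElementaryAction Γ X)
    (hcard : ∃ a b c : X, a ≠ b ∧ a ≠ c ∧ b ≠ c)
    (g : Γ) (pg mg : X) (hg : IsLoxodromic g pg mg)
    (U V : Set X) (hU : IsOpen U) (hV : IsOpen V)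
    (hUne : U.Nonempty) (hVne : V.Nonempty) (hUV : Disjoint U V)
    (hcover : U ∪ V ≠ Set.univ) :
    ∃ (h : Γ) (p m : X), IsLoxodromic h p m ∧ p ∈ U ∧ m ∈ V :=
  loxodromic_axes_dense_general Γ X hconv hmin g pg mg hg U V hU hV hUne hVne hUV hcover
end

section
/- A non-elementary minimal convergence action is generically free: if Γ acts minimally on a compact metrizable perfect space X as a non-elementary convergence group, then for every γ ∈ Γ not in the kernel of the action, the fixed point set Fix(γ) has empty interior (is nowhere dense). -/
/-!
Suppose `γ` fixes a nonempty open set `U` pointwise. Proper discontinuity on triples at a small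
scale, combined with a finite cover of `X` by translates of a ball in `U` (minimality), gives for
every `ε > 0` an element `q` squeezing `X \ U` into two `ε`-balls; the conjugate `q γ q⁻¹` then
fixes everything outside these balls. Along a subsequence the balls shrink to two points `a, b`,
so the conjugates eventually fix three chosen points off `{a, b}`. Stabilizers of triples are
finite, so one conjugate occurs infinitely often; it fixes the dense set `X \ {a, b}`, hence is
trivial, and so is `γ`.
-/

open Pointwise

open Metric Set Filter Topology

section MetricSpace

theorem exists_pair_le_dist_of_le_dist {X Y : Type*} [PseudoMetricSpace X] [PseudoMetricSpace Y]
    (f : X → Y) {l : ℝ} {c p x y : X} (hcp : 2 * l ≤ dist c p)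
    (hxy : 4 * l ≤ dist (f x) (f y)) :
    ∃ a ∈ ({c, p, x, y} : Set X), ∃ b ∈ ({c, p, x, y} : Set X),
      l ≤ dist a b ∧ l ≤ dist (f a) (f b) := by
  by_cases hfcp : l ≤ dist (f c) (f p)
  · exact ⟨c, by simp, p, by simp, by linarith [dist_nonneg (x := c) (y := p)], hfcp⟩
  rw [not_le] at hfcp
  obtain ⟨w, hw, hfwc⟩ : ∃ w ∈ ({c, p, x, y} : Set X), 2 * l ≤ dist (f w) (f c) := by
    by_contra! h
    have := dist_triangle_right (f x) (f y) (f c)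
    linarith [h x (by simp), h y (by simp)]
  by_cases hwc : l ≤ dist w c
  · exact ⟨w, hw, c, by simp, hwc, by linarith [dist_nonneg (x := f w) (y := f c)]⟩
  · refine ⟨w, hw, p, by simp, ?_, ?_⟩
    · linarith [dist_triangle_left c p w]
    · linarith [dist_triangle_right (f w) (f c) (f p)]

variable {X : Type*} [MetricSpace X]

theorem Set.Finite.exists_pos_le_dist {s : Set X} (hs : s.Finite) :
    ∃ δ > 0, ∀ x ∈ s, ∀ y ∈ s, x ≠ y → δ ≤ dist x y := by
  have h : ∀ᶠ δ in 𝓝[>] (0 : ℝ), ∀ x ∈ s, ∀ y ∈ s, x ≠ y → δ ≤ dist x y := by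
    refine hs.eventually_all.2 fun x _ => hs.eventually_all.2 fun y _ => ?_
    by_cases hxy : x = y
    · exact Eventually.of_forall fun _ h => absurd hxy h
    · exact (eventually_nhdsWithin_of_eventually_nhds
        (eventually_le_nhds (dist_pos.2 hxy))).mono fun _ h _ => h
  exact (h.and self_mem_nhdsWithin).exists.imp fun δ h => ⟨h.2, h.1⟩

theorem eventually_notMem_ball {ι : Type*} {l : Filter ι} {u : ι → X} {ε : ι → ℝ} {a w : X}
    (hu : Tendsto u l (𝓝 a)) (hε : Tendsto ε l (𝓝 0)) (hw : w ≠ a) :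
    ∀ᶠ i in l, w ∉ ball (u i) (ε i) :=
  (hε.eventually_lt (tendsto_const_nhds.dist hu) (dist_pos.2 hw)).mono
    fun _ h hw => (mem_ball.1 hw).not_gt h

end MetricSpace

section PerfectSpace

variable {X : Type*} [TopologicalSpace X] [T1Space X] [PerfectSpace X]

theorem dense_compl_pair (a b : X) : Dense ({a, b}ᶜ : Set X) := by
  rw [← singleton_union, compl_union]
  exact (dense_compl_singleton a).inter_of_isOpen_left (dense_compl_singleton b)
    isOpen_compl_singleton

theorem exists_distinct_triple_notMem_pair (a b : X) :
    ∃ x y z : X, x ∉ ({a, b} : Set X) ∧ y ∉ ({a, b} : Set X) ∧ z ∉ ({a, b} : Set X) ∧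
      x ≠ y ∧ x ≠ z ∧ y ≠ z := by
  classical
  have : Infinite X := infinite_univ_iff.1 (infinite_of_mem_nhds a univ_mem)
  obtain ⟨x, hx⟩ := Infinite.exists_notMem_finset ({a, b} : Finset X)
  obtain ⟨y, hy⟩ := Infinite.exists_notMem_finset ({a, b, x} : Finset X)
  obtain ⟨z, hz⟩ := Infinite.exists_notMem_finset ({a, b, x, y} : Finset X)
  simp only [Finset.mem_insert, Finset.mem_singleton, not_or] at hx hy hz
  simp only [mem_insert_iff, mem_singleton_iff, not_or]
  exact ⟨x, y, z, hx, ⟨hy.1, hy.2.1⟩, ⟨hz.1, hz.2.1⟩, Ne.symm hy.2.2, Ne.symm hz.2.2.1,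
    Ne.symm hz.2.2.2⟩

end PerfectSpace

section MulAction

variable {Γ X : Type*} [Group Γ] [MulAction Γ X]

theorem exists_notMem_inv_smul_mem_of_card_lt [Infinite Γ] {V : Set X} {t : Finset Γ}
    (ht : univ ⊆ ⋃ h ∈ t, h • V) {F : Set Γ} (hF : F.Finite) {P : Finset X}
    (hP : t.card < P.card) :
    ∃ q ∉ F, ∃ x ∈ P, ∃ y ∈ P, x ≠ y ∧ q⁻¹ • x ∈ V ∧ q⁻¹ • y ∈ V := by
  have hF' : (⋃ h ∈ t, (· * h⁻¹) '' F).Finite := t.finite_toSet.biUnion fun h _ => hF.image _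
  obtain ⟨g, hg⟩ := hF'.infinite_compl.nonempty
  have hcov : ∀ x : X, ∃ h ∈ t, g⁻¹ • x ∈ h • V := fun x => by
    simpa only [mem_iUnion₂, exists_prop] using ht (mem_univ (g⁻¹ • x))
  choose! k hkt hk using hcov
  obtain ⟨x, hx, y, hy, hxy, hkxy⟩ :=
    Finset.exists_ne_map_eq_of_card_lt_of_maps_to hP fun x _ => hkt x
  refine ⟨g * k x, fun hq => hg (mem_biUnion (hkt x) ⟨_, hq, by simp⟩), x, hx, y, hy, hxy, ?_, ?_⟩
  · simpa [mul_smul] using mem_smul_set_iff_inv_smul_mem.1 (hk x)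
  · simpa [mul_smul, hkxy] using mem_smul_set_iff_inv_smul_mem.1 (hk y)

theorem conj_smul_eq_self_of_smul_compl_subset {γ q : Γ} {U S : Set X}
    (hγ : ∀ x ∈ U, γ • x = x) (hq : q • Uᶜ ⊆ S) {w : X} (hw : w ∉ S) :
    (q * γ * q⁻¹) • w = w := by
  have hwU : q⁻¹ • w ∈ U := by
    by_contra h
    exact hw (hq (mem_smul_set_iff_inv_smul_mem.2 h))
  rw [mul_smul, mul_smul, hγ _ hwU, smul_inv_smul]

end MulAction

section SeparatedTriples

variable {X : Type*}

def separatedTriples [PseudoMetricSpace X] (l : ℝ) : Set (X × X × X) :=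
  {p | l ≤ dist p.1 p.2.1 ∧ l ≤ dist p.1 p.2.2 ∧ l ≤ dist p.2.1 p.2.2}

theorem isClosed_separatedTriples [PseudoMetricSpace X] (l : ℝ) :
    IsClosed (separatedTriples (X := X) l) := by
  simp only [separatedTriples, ofPred_and]
  exact (isClosed_le continuous_const (by fun_prop)).inter
    ((isClosed_le continuous_const (by fun_prop)).inter
      (isClosed_le continuous_const (by fun_prop)))

theorem separatedTriples_subset_distinctTriples [MetricSpace X] {l : ℝ} (hl : 0 < l) :
    separatedTriples l ⊆ distinctTriples X := fun _ ⟨h₁, h₂, h₃⟩ =>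
  ⟨dist_pos.1 (hl.trans_le h₁), dist_pos.1 (hl.trans_le h₂), dist_pos.1 (hl.trans_le h₃)⟩

theorem smul_mem_ball_union_ball_of_notMem {Γ : Type*} [Group Γ] [PseudoMetricSpace X]
    [MulAction Γ X] {l : ℝ} {q : Γ}
    (hq : q ∉ {g : Γ | (g • separatedTriples (X := X) l ∩ separatedTriples l).Nonempty})
    {a b w : X} (hab : l ≤ dist a b) (hqab : l ≤ dist (q • a) (q • b)) (hwa : l ≤ dist w a)
    (hwb : l ≤ dist w b) : q • w ∈ ball (q • a) l ∪ ball (q • b) l := by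
  by_contra hqw
  simp only [mem_union, mem_ball, not_or, not_lt] at hqw
  obtain ⟨hqwa, hqwb⟩ := hqw
  rw [dist_comm] at hwa hwb hqwa hqwb
  exact hq ⟨q • (a, b, w), smul_mem_smul_set ⟨hab, hwa, hwb⟩, hqab, hqwa, hqwb⟩

end SeparatedTriples

namespace IsConvergenceAction

section TopologicalSpace

variable {Γ X : Type*} [Group Γ] [TopologicalSpace X] [MulAction Γ X]

theorem continuousConstSMul (hconv : IsConvergenceAction Γ X) : ContinuousConstSMul Γ X :=
  ⟨hconv.1⟩

theorem finite_smul_inter (hconv : IsConvergenceAction Γ X) {K L : Set (X × X × X)}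
    (hKd : K ⊆ distinctTriples X) (hLd : L ⊆ distinctTriples X) (hK : IsCompact K)
    (hL : IsCompact L) : {g : Γ | (g • K ∩ L).Nonempty}.Finite := by
  simp only [← image_smul]
  exact hconv.2 K L hKd hLd hK hL

theorem finite_fixing_triple (hconv : IsConvergenceAction Γ X) {a b c : X} (hab : a ≠ b)
    (hac : a ≠ c) (hbc : b ≠ c) : {g : Γ | g • a = a ∧ g • b = b ∧ g • c = c}.Finite := by
  have hd : {(a, b, c)} ⊆ distinctTriples X := singleton_subset_iff.2 ⟨hab, hac, hbc⟩
  refine (hconv.finite_smul_inter hd hd isCompact_singleton isCompact_singleton).subset ?_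
  rintro g ⟨ha, hb, hc⟩
  simp [smul_set_singleton, ha, hb, hc]

theorem exists_forall_smul_eq_of_eventually [T2Space X] [PerfectSpace X]
    (hconv : IsConvergenceAction Γ X) {ι : Type*} {l : Filter ι} [l.NeBot] {β : ι → Γ}
    {a b : X} (hβ : ∀ w ∉ ({a, b} : Set X), ∀ᶠ i in l, β i • w = w) :
    ∃ i, ∀ w : X, β i • w = w := by
  obtain ⟨x, y, z, hx, hy, hz, hxy, hxz, hyz⟩ := exists_distinct_triple_notMem_pair a b
  have hev : ∀ᶠ i in l, β i ∈ {g : Γ | g • x = x ∧ g • y = y ∧ g • z = z} :=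
    (hβ x hx).and ((hβ y hy).and (hβ z hz))
  -- `β` eventually lies in a finite set, so it frequently takes one value `g`
  obtain ⟨g, -, hg⟩ := (hconv.finite_fixing_triple hxy hxz hyz).frequently_exists
    (p := fun g i => β i = g) |>.1 (hev.frequently.mono fun i hi => ⟨β i, hi, rfl⟩)
  have hfix : EqOn (fun w : X => g • w) id ({a, b}ᶜ : Set X) := fun w hw => by
    obtain ⟨i, hi, rfl⟩ := ((hβ w hw).and_frequently hg).exists
    exact hi
  have htriv := Continuous.ext_on (dense_compl_pair a b) (hconv.1 g) continuous_id hfix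
  obtain ⟨i, rfl⟩ := hg.exists
  exact ⟨i, congrFun htriv⟩

end TopologicalSpace

variable {Γ X : Type*} [Group Γ] [MetricSpace X] [CompactSpace X] [MulAction Γ X]

theorem finite_smul_separatedTriples (hconv : IsConvergenceAction Γ X) {l : ℝ} (hl : 0 < l) :
    {g : Γ | (g • separatedTriples (X := X) l ∩ separatedTriples l).Nonempty}.Finite :=
  hconv.finite_smul_inter (separatedTriples_subset_distinctTriples hl)
    (separatedTriples_subset_distinctTriples hl)
    (isClosed_separatedTriples l).isCompact (isClosed_separatedTriples l).isCompact

/- Cover `X` by translates `h • V` of a small ball `V ⊆ U`. Among more well-separated points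
than translates, two lie in one `q • V`, where `q` is chosen off the finite set of elements
moving some `l`-separated triple to an `l`-separated triple. Then `q` keeps some pair `a, b ∈ V`
`l`-separated, and every `w ∉ U`, being `l`-far from `a` and `b`, is sent `l`-close to
`q • a` or `q • b`. -/
theorem exists_smul_compl_subset_union_ball [PerfectSpace X] [Infinite Γ]
    [MulAction.IsMinimal Γ X] (hconv : IsConvergenceAction Γ X) {U : Set X} (hU : IsOpen U)
    (hne : U.Nonempty) {ε : ℝ} (hε : 0 < ε) :
    ∃ q : Γ, ∃ u v : X, q • Uᶜ ⊆ ball u ε ∪ ball v ε := by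
  have := hconv.continuousConstSMul
  obtain ⟨c, hc⟩ := hne
  obtain ⟨r, hr, hrU⟩ := Metric.isOpen_iff.1 hU c hc
  obtain ⟨p, hp, hpc⟩ :=
    (infinite_of_mem_nhds c (ball_mem_nhds c (half_pos hr))).nontrivial.exists_ne c
  obtain ⟨t, ht⟩ := isCompact_univ.exists_finite_cover_smul Γ (isOpen_ball (x := c))
    (nonempty_ball.2 (half_pos hr))
  have : Infinite X := infinite_univ_iff.1 (infinite_of_mem_nhds c univ_mem)
  obtain ⟨P, hP⟩ := Infinite.exists_subset_card_eq X (t.card + 1)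
  obtain ⟨δ, hδ, hPδ⟩ := P.finite_toSet.exists_pos_le_dist
  set l := min (min (r / 2) (dist c p / 2)) (min (δ / 4) ε)
  have hl : 0 < l := by
    have := dist_pos.2 hpc.symm
    positivity
  have hlr : l ≤ r / 2 := (min_le_left _ _).trans (min_le_left _ _)
  have hlcp : l ≤ dist c p / 2 := (min_le_left _ _).trans (min_le_right _ _)
  have hlδ : l ≤ δ / 4 := (min_le_right _ _).trans (min_le_left _ _)
  have hlε : l ≤ ε := (min_le_right _ _).trans (min_le_right _ _)
  obtain ⟨q, hq, x, hx, y, hy, hxy, hxV, hyV⟩ := exists_notMem_inv_smul_mem_of_card_lt ht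
    (hconv.finite_smul_separatedTriples hl) (hP ▸ lt_add_one _)
  obtain ⟨a, ha, b, hb, hab, hqab⟩ := exists_pair_le_dist_of_le_dist (q • ·)
    (l := l) (c := c) (p := p) (x := q⁻¹ • x) (y := q⁻¹ • y) (by linarith)
    (by simpa only [smul_inv_smul] using by linarith [hPδ x hx y hy hxy])
  have hV : ∀ z ∈ ({c, p, q⁻¹ • x, q⁻¹ • y} : Set X), dist z c < r / 2 := by
    simp only [mem_insert_iff, mem_singleton_iff, forall_eq_or_imp, forall_eq]
    exact ⟨by simpa using half_pos hr, hp, hxV, hyV⟩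
  refine ⟨q, q • a, q • b, ?_⟩
  rintro _ ⟨w, hw, rfl⟩
  have hwc : r ≤ dist w c := not_lt.1 fun h => hw (hrU h)
  refine union_subset_union (ball_subset_ball hlε) (ball_subset_ball hlε)
    (smul_mem_ball_union_ball_of_notMem hq hab hqab ?_ ?_)
  · linarith [hV a ha, dist_triangle w a c]
  · linarith [hV b hb, dist_triangle w b c]

end IsConvergenceAction

theorem convergence_generically_free_general (Γ X : Type*) [Group Γ]
    [TopologicalSpace X] [CompactSpace X] [TopologicalSpace.MetrizableSpace X]
    [MulAction Γ X]
    (hconv : IsConvergenceAction Γ X)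
    (hmin : IsMinimalAction Γ X)
    (hne : IsNonElementaryAction Γ X)
    (hperf : Perfect (Set.univ : Set X))
    (γ : Γ) (hγ : ∃ x : X, γ • x ≠ x) :
    interior {x : X | γ • x = x} = ∅ := by
  let _ : MetricSpace X := TopologicalSpace.metrizableSpaceMetric X
  have : PerfectSpace X := ⟨hperf.2⟩
  have : Infinite Γ := hne.1
  have : MulAction.IsMinimal Γ X := ⟨hmin⟩
  by_contra hU
  have hfix : ∀ y ∈ interior {x : X | γ • x = x}, γ • y = y := fun _ hy =>
    interior_subset (s := {x : X | γ • x = x}) hy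
  choose q u v hq using fun k : ℕ => hconv.exists_smul_compl_subset_union_ball isOpen_interior
    (nonempty_iff_ne_empty.2 hU) (Nat.one_div_pos_of_nat (α := ℝ) (n := k))
  obtain ⟨⟨a, b⟩, -, φ, hφ, huv⟩ :=
    isCompact_univ.tendsto_subseq (x := fun k => (u k, v k)) fun _ => mem_univ _
  have hu : Tendsto (fun k => u (φ k)) atTop (𝓝 a) := huv.fst_nhds
  have hv : Tendsto (fun k => v (φ k)) atTop (𝓝 b) := huv.snd_nhds
  have hε := (tendsto_one_div_add_atTop_nhds_zero_nat (𝕜 := ℝ)).comp hφ.tendsto_atTop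
  have hβ : ∀ w ∉ ({a, b} : Set X), ∀ᶠ k in atTop, (q (φ k) * γ * (q (φ k))⁻¹) • w = w := by
    intro w hw
    simp only [mem_insert_iff, mem_singleton_iff, not_or] at hw
    filter_upwards [eventually_notMem_ball hu hε hw.1, eventually_notMem_ball hv hε hw.2]
      with k hka hkb
    exact conj_smul_eq_self_of_smul_compl_subset hfix (hq (φ k)) fun h => h.elim hka hkb
  obtain ⟨k, hk⟩ := hconv.exists_forall_smul_eq_of_eventually hβ
  obtain ⟨x, hx⟩ := hγ
  exact hx (by simpa [mul_smul] using hk (q (φ k) • x))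

/-- A non-elementary minimal convergence action on a perfect compact
metrizable space is generically free: every element not in the kernel of the
action has fixed point set with empty interior. -/
theorem convergence_generically_free (Γ X : Type*) [Group Γ]
    [TopologicalSpace X] [CompactSpace X] [TopologicalSpace.MetrizableSpace X]
    [MulAction Γ X]
    (hconv : IsConvergenceAction Γ X)
    (hmin : IsMinimalAction Γ X)
    (hne : IsNonElementaryAction Γ X)
    (hcard : ∃ a b c : X, a ≠ b ∧ a ≠ c ∧ b ≠ c)
    (hperf : Perfect (Set.univ : Set X))
    (γ : Γ) (hγ : ∃ x : X, γ • x ≠ x) :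
    interior {x : X | γ • x = x} = ∅ :=
  convergence_generically_free_general Γ X hconv hmin hne hperf γ hγ
end
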